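/- arXiv:1904.04513 — 6 statements merged into one kernel-verified Lean document; each statement's English description precedes it below -/
import Mathlib

section
/- There exists a family of forward tries T_f with n nodes (for infinitely many n) over a binary-or-larger alphabet such that the number of distinct suffixes |Suffix(T_f)| is Ω(n²). Concretely, the trie consisting of a path of length k from the root attached to a complete binary tree with k leaves has at least k(k+1) distinct suffixes while having Θ(k) nodes. -/
/-- A rooted labeled tree on `n` nodes: node `0` is the root, every non-root
node `v` has a parent with smaller index, and `label v` is the character on
the edge between `v` and its parent. -/
structure LTree (n : ℕ) (A : Type*) where
  parent : Fin n → Fin n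
  label : Fin n → A
  hp : ∀ v : Fin n, v.val ≠ 0 → (parent v).val < v.val

namespace LTree

variable {n : ℕ} {A : Type*}

/-- The string spelled by the path from node `v` up to the root
(read in the leaf-to-root direction). -/
def strUp (T : LTree n A) (v : Fin n) : List A :=
  if h : v.val = 0 then []
  else T.label v :: T.strUp (T.parent v)
termination_by v.val
decreasing_by exact T.hp v h

/-- Substrings of the backward trie: strings spelled by upward paths from a
node to one of its ancestors (prefixes of the upward root-paths). -/
def SubstrU (T : LTree n A) : Set (List A) :=
  { s | ∃ (v : Fin n) (m : ℕ), s = (T.strUp v).take m }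

/-- Substrings of the forward trie: strings spelled by downward paths from a
node to one of its descendants. -/
def SubstrD (T : LTree n A) : Set (List A) :=
  { s | ∃ (v : Fin n) (m : ℕ), s = ((T.strUp v).take m).reverse }

/-- A node is a leaf if no (non-root) node has it as parent. -/
def isLeaf (T : LTree n A) (v : Fin n) : Prop :=
  ∀ u : Fin n, u.val ≠ 0 → T.parent u ≠ v

/-- Suffixes of the forward trie: strings spelled by downward paths from any
node to a leaf below it. -/
def SuffixF (T : LTree n A) : Set (List A) :=
  { s | ∃ v : Fin n, T.isLeaf v ∧ ∃ m : ℕ, s = ((T.strUp v).take m).reverse }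

/-- Suffixes of the backward trie: strings spelled by the paths from any
non-root node up to the root. -/
def SuffixB (T : LTree n A) : Set (List A) :=
  { s | ∃ v : Fin n, v.val ≠ 0 ∧ s = T.strUp v }

/-- The trie condition: out-going edges of each node (equivalently, edges to
the children of each node) carry mutually distinct characters. -/
def isTrie (T : LTree n A) : Prop :=
  ∀ u v : Fin n, u.val ≠ 0 → v.val ≠ 0 →
    T.parent u = T.parent v → T.label u = T.label v → u = v

/-- `X` is right-maximal on the forward trie: it has two distinct right
extensions, or an occurrence ending at a leaf. -/
def rightMaximalF (T : LTree n A) (X : List A) : Prop :=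
  (∃ a b : A, a ≠ b ∧ X ++ [a] ∈ T.SubstrD ∧ X ++ [b] ∈ T.SubstrD) ∨
  (∃ v : Fin n, T.isLeaf v ∧ ∃ m : ℕ, X = ((T.strUp v).take m).reverse)

/-- `X` is left-maximal on the forward trie: it has two distinct left
extensions, or an occurrence beginning at the root. -/
def leftMaximalF (T : LTree n A) (X : List A) : Prop :=
  (∃ a b : A, a ≠ b ∧ (a :: X) ∈ T.SubstrD ∧ (b :: X) ∈ T.SubstrD) ∨
  (∃ v : Fin n, X = (T.strUp v).reverse)

/-- `Y` is left-maximal on the backward trie: two distinct left extensions,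
or an occurrence beginning at a leaf. -/
def leftMaximalB (T : LTree n A) (Y : List A) : Prop :=
  (∃ a b : A, a ≠ b ∧ (a :: Y) ∈ T.SubstrU ∧ (b :: Y) ∈ T.SubstrU) ∨
  (∃ v : Fin n, T.isLeaf v ∧ ∃ m : ℕ, Y = (T.strUp v).take m)

/-- `Y` is right-maximal on the backward trie: two distinct right extensions,
or an occurrence ending at the root. -/
def rightMaximalB (T : LTree n A) (Y : List A) : Prop :=
  (∃ a b : A, a ≠ b ∧ Y ++ [a] ∈ T.SubstrU ∧ Y ++ [b] ∈ T.SubstrU) ∨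
  (∃ v : Fin n, Y = T.strUp v)

end LTree

/-! In a trie, distinct nodes spell distinct root paths. Below a path of length `p` hang a
complete binary tree with `2 ^ j` leaves: the root path of each leaf is `j` symbols particular
to that leaf followed by the path, so its cuts after `j + i` symbols, `0 ≤ i ≤ p`, give
`(p + 1) * 2 ^ j` pairwise distinct suffixes on only `p + 2 ^ (j + 1) - 1` nodes. -/

namespace LTree

variable {n : ℕ} {A : Type*}

theorem strUp_of_val_eq_zero (T : LTree n A) {v : Fin n} (hv : v.val = 0) : T.strUp v = [] := by
  rw [strUp, dif_pos hv]

theorem strUp_of_val_ne_zero (T : LTree n A) {v : Fin n} (hv : v.val ≠ 0) :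
    T.strUp v = T.label v :: T.strUp (T.parent v) := by
  rw [strUp, dif_neg hv]

theorem strUp_eq_nil_iff (T : LTree n A) {v : Fin n} : T.strUp v = [] ↔ v.val = 0 := by
  refine ⟨fun h => ?_, T.strUp_of_val_eq_zero⟩
  by_contra hv
  rw [T.strUp_of_val_ne_zero hv] at h
  exact List.cons_ne_nil _ _ h

theorem isTrie.strUp_injective {T : LTree n A} (hT : T.isTrie) : Function.Injective T.strUp := by
  intro v w h
  induction v using WellFoundedLT.induction generalizing w with
  | _ v ih =>
    by_cases hv : v.val = 0
    · have hw : w.val = 0 := T.strUp_eq_nil_iff.1 (h ▸ T.strUp_of_val_eq_zero hv)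
      exact Fin.ext (hv.trans hw.symm)
    · have hw : w.val ≠ 0 := fun hw =>
        hv (T.strUp_eq_nil_iff.1 (h.trans (T.strUp_of_val_eq_zero hw)))
      rw [T.strUp_of_val_ne_zero hv, T.strUp_of_val_ne_zero hw, List.cons.injEq] at h
      exact hT v w hv hw (ih _ (T.hp v hv) h.2) h.1

theorem SuffixF_finite (T : LTree n A) : T.SuffixF.Finite := by
  refine (Set.finite_iUnion fun v : Fin n =>
    ((T.strUp v).inits.map List.reverse).finite_toSet).subset ?_
  rintro _ ⟨v, -, m, rfl⟩
  exact Set.mem_iUnion.2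
    ⟨v, List.mem_map_of_mem ((List.mem_inits _ _).2 (List.take_prefix _ _))⟩

/-- `hsplit` says that the leaves in `S` lie at depth `d` below a common node whose root path
spells `c`. -/
theorem isTrie.mul_card_le_ncard_SuffixF {T : LTree n A} (hT : T.isTrie) {S : Finset (Fin n)}
    {d : ℕ} {c : List A} (hleaf : ∀ l ∈ S, T.isLeaf l)
    (hsplit : ∀ l ∈ S, ∃ w, w.length = d ∧ T.strUp l = w ++ c) :
    (c.length + 1) * S.card ≤ T.SuffixF.ncard := by
  set f : ℕ × Fin n → List A := fun x => ((T.strUp x.2).take (d + x.1)).reverse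
  have hf : ∀ x ∈ Finset.range (c.length + 1) ×ˢ S,
      ∃ w, w.length = d ∧ T.strUp x.2 = w ++ c ∧ f x = (w ++ c.take x.1).reverse := by
    rintro ⟨i, l⟩ hx
    obtain ⟨w, rfl, hw⟩ := hsplit l (Finset.mem_product.1 hx).2
    exact ⟨w, rfl, hw, by simp only [f, hw, List.take_length_add_append]⟩
  calc (c.length + 1) * S.card
      = (↑(Finset.range (c.length + 1) ×ˢ S) : Set (ℕ × Fin n)).ncard := by
        rw [Set.ncard_coe_finset, Finset.card_product, Finset.card_range]
    _ ≤ T.SuffixF.ncard := by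
      refine Set.ncard_le_ncard_of_injOn f ?_ ?_ T.SuffixF_finite
      · rintro ⟨i, l⟩ hx
        exact ⟨l, hleaf l (Finset.mem_product.1 hx).2, d + i, rfl⟩
      · rintro ⟨i, l⟩ hx ⟨i', l'⟩ hx' he
        obtain ⟨w, hw, hl, hfx⟩ := hf _ hx
        obtain ⟨w', hw', hl', hfx'⟩ := hf _ hx'
        have hi := Finset.mem_range.1 (Finset.mem_product.1 hx).1
        have hi' := Finset.mem_range.1 (Finset.mem_product.1 hx').1
        rw [hfx, hfx', List.reverse_inj] at he
        have hlen := congrArg List.length he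
        simp only [List.length_append, List.length_take] at hlen
        obtain rfl : i = i' := by omega
        obtain rfl : w = w' := List.append_inj_left he (hw.trans hw'.symm)
        exact Prod.ext rfl (hT.strUp_injective (hl.trans hl'.symm))

section PathHeap

variable (p j : ℕ)

/-- Nodes `0, …, p` form a path whose edges are labelled `2`. For `1 ≤ h < 2 ^ (j + 1)`, node
`p + h - 1` is node `h` of a complete binary heap rooted at node `p`; its edge to the heap
parent `h / 2` is labelled `h % 2`. -/
def pathHeap : LTree (p + 2 * 2 ^ j - 1) (Fin 3) where
  parent v := if v.val ≤ p then ⟨v.val - 1, by omega⟩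
    else ⟨p + (v.val - p + 1) / 2 - 1, by have := j.two_pow_pos; omega⟩
  label v := if v.val ≤ p then 2 else ⟨(v.val - p + 1) % 2, by omega⟩
  hp v hv := by split_ifs <;> dsimp only <;> omega

theorem pathHeap_parent_val (v : Fin (p + 2 * 2 ^ j - 1)) :
    ((pathHeap p j).parent v).val =
      if v.val ≤ p then v.val - 1 else p + (v.val - p + 1) / 2 - 1 := by
  simp only [pathHeap]
  split_ifs <;> rfl

theorem pathHeap_label_val (v : Fin (p + 2 * 2 ^ j - 1)) :
    ((pathHeap p j).label v).val = if v.val ≤ p then 2 else (v.val - p + 1) % 2 := by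
  simp only [pathHeap]
  split_ifs <;> rfl

theorem strUp_pathHeap_of_le (v : Fin (p + 2 * 2 ^ j - 1)) (hv : v.val ≤ p) :
    (pathHeap p j).strUp v = List.replicate v.val 2 := by
  induction v using WellFoundedLT.induction with
  | _ v ih =>
    by_cases hv0 : v.val = 0
    · rw [strUp_of_val_eq_zero _ hv0, hv0, List.replicate_zero]
    · have hpar : (pathHeap p j).parent v = ⟨v.val - 1, by omega⟩ :=
        Fin.ext ((pathHeap_parent_val p j v).trans (if_pos hv))
      have hlab : (pathHeap p j).label v = 2 :=
        Fin.ext ((pathHeap_label_val p j v).trans (if_pos hv))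
      rw [strUp_of_val_ne_zero _ hv0, hpar, hlab, ih _ (Fin.lt_def.2 (by dsimp only; omega))
        (by dsimp only; omega), ← List.replicate_succ, Nat.sub_add_cancel (by omega)]

/-- Level `t` of the heap consists of the nodes `p + h - 1` with `2 ^ t ≤ h < 2 ^ (t + 1)`. -/
theorem strUp_pathHeap_of_level (t : ℕ) (v : Fin (p + 2 * 2 ^ j - 1))
    (hlo : p + 2 ^ t ≤ v.val + 1) (hhi : v.val + 1 < p + 2 ^ (t + 1)) :
    ∃ w, w.length = t ∧ (pathHeap p j).strUp v = w ++ List.replicate p 2 := by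
  induction t generalizing v with
  | zero =>
    have hvp : v.val = p := by rw [pow_zero] at hlo; omega
    exact ⟨[], rfl, by rw [strUp_pathHeap_of_le p j v hvp.le, hvp, List.nil_append]⟩
  | succ t ih =>
    rw [pow_succ 2 (t + 1)] at hhi
    have hv : ¬ v.val ≤ p := by have := Nat.one_le_two_pow (n := t); omega
    obtain ⟨w, hw, hpar⟩ := ih ((pathHeap p j).parent v)
      (by rw [pathHeap_parent_val, if_neg hv]; omega)
      (by rw [pathHeap_parent_val, if_neg hv]; omega)
    exact ⟨(pathHeap p j).label v :: w, by rw [List.length_cons, hw],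
      by rw [strUp_of_val_ne_zero _ (by omega), hpar, List.cons_append]⟩

theorem pathHeap_isLeaf (v : Fin (p + 2 * 2 ^ j - 1)) (hv : p + 2 ^ j ≤ v.val + 1) :
    (pathHeap p j).isLeaf v := by
  intro u _ hpar
  have hu := u.isLt
  have := congrArg Fin.val hpar
  rw [pathHeap_parent_val] at this
  split_ifs at this <;> omega

theorem pathHeap_isTrie : (pathHeap p j).isTrie := by
  intro u v _ _ hpar hlab
  have hpar' := congrArg Fin.val hpar
  have hlab' := congrArg Fin.val hlab
  rw [pathHeap_parent_val, pathHeap_parent_val] at hpar'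
  rw [pathHeap_label_val, pathHeap_label_val] at hlab'
  apply Fin.ext
  split_ifs at hpar' hlab' <;> omega

theorem mul_le_ncard_SuffixF_pathHeap : (p + 1) * 2 ^ j ≤ (pathHeap p j).SuffixF.ncard := by
  have := j.two_pow_pos
  let leaf₀ : Fin (p + 2 * 2 ^ j - 1) := ⟨p + 2 ^ j - 1, by omega⟩
  have hS : ∀ l ∈ Finset.Ici leaf₀, p + 2 ^ j ≤ l.val + 1 := fun l hl => by
    rw [Finset.mem_Ici, Fin.le_def] at hl
    dsimp only [leaf₀] at hl
    omega
  have h := (pathHeap_isTrie p j).mul_card_le_ncard_SuffixF (S := Finset.Ici leaf₀) (d := j)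
    (c := List.replicate p 2) (fun l hl => pathHeap_isLeaf p j l (hS l hl))
    (fun l hl => strUp_pathHeap_of_level p j j l (hS l hl) (by have := l.isLt; omega))
  rwa [List.length_replicate, Fin.card_Ici, show p + 2 * 2 ^ j - 1 - leaf₀.val = 2 ^ j by
    simp only [leaf₀]; omega] at h

end PathHeap

end LTree

/-- there is a family of forward tries (a path of length `k = 2^j`
attached to a complete binary tree with `k` leaves) with `Θ(k)` nodes and at
least `k(k+1)` distinct suffixes; hence `|Suffix(T_f)| = Ω(n²)` for infinitely
many `n`, over an alphabet of size `≥ 2`. -/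
theorem stmt1 :
    ∀ j : ℕ, 1 ≤ j → ∃ (n : ℕ) (T : LTree n (Fin 3)),
      T.isTrie ∧ 2 ^ j ≤ n ∧ n ≤ 4 * 2 ^ j ∧
      2 ^ j * (2 ^ j + 1) ≤ T.SuffixF.ncard := by
  intro j _
  have := j.two_pow_pos
  refine ⟨_, LTree.pathHeap (2 ^ j) j, LTree.pathHeap_isTrie _ _, by omega, by omega, ?_⟩
  simpa only [mul_comm] using LTree.mul_le_ncard_SuffixF_pathHeap (2 ^ j) j
end

section
/- For any backward trie with n ≥ 3 nodes, its suffix tree has at most 2n − 3 nodes and at most 2n − 4 edges, independently of the alphabet size. -/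
/-- The node set of the suffix tree of the backward trie: prefixes of suffixes
that are branching, or suffixes that are maximal w.r.t. the prefix order
(the leaves), or the empty string (the root). -/
def STreeNodesB {n : ℕ} {A : Type*} (T : LTree n A) : Set (List A) :=
  {P | (∃ s ∈ T.SuffixB, P <+: s) ∧
    ((∃ a b : A, a ≠ b ∧ (∃ s ∈ T.SuffixB, P ++ [a] <+: s) ∧
        (∃ s ∈ T.SuffixB, P ++ [b] <+: s)) ∨
     (P ∈ T.SuffixB ∧ ∀ s ∈ T.SuffixB, P <+: s → P = s) ∨
     P = [])}

/-!
Every node of the suffix tree is the root, a leaf (a prefix-maximal suffix) or a branching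
prefix. There are at most `n - 1` suffixes, and a set of `k` strings has at most `k - 1`
branching prefixes, because adding one string creates at most one new branching node. If the
root branches it is among those, which gives `(n - 2) + (n - 1)` nodes. Otherwise every edge of
the trie carries the same letter, the suffixes form a chain under the prefix order, and the
suffix tree consists of the root and a single leaf.
-/

section PrefixTree

variable {A : Type*}

def branchingPrefixes (S : Set (List A)) : Set (List A) :=
  {P | ∃ a b : A, a ≠ b ∧ (∃ s ∈ S, P ++ [a] <+: s) ∧ (∃ s ∈ S, P ++ [b] <+: s)}

def prefixMaximals (S : Set (List A)) : Set (List A) :=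
  {P | P ∈ S ∧ ∀ s ∈ S, P <+: s → P = s}

lemma Set.Subsingleton.ncard_le_one {α : Type*} {s : Set α} (h : s.Subsingleton) :
    s.ncard ≤ 1 :=
  (Set.ncard_le_one_iff h.finite).2 fun ha hb => h ha hb

lemma prefixMaximals_subset (S : Set (List A)) : prefixMaximals S ⊆ S :=
  fun _ hP => hP.1

lemma eq_of_append_singleton_prefix {P s : List A} {a b : A}
    (ha : P ++ [a] <+: s) (hb : P ++ [b] <+: s) : a = b := by
  have h := (List.prefix_of_prefix_length_le ha hb (by simp)).eq_of_length (by simp)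
  simpa using h

lemma Set.Finite.setOf_exists_prefix {S : Set (List A)} (hS : S.Finite) :
    {P | ∃ s ∈ S, P <+: s}.Finite :=
  (hS.biUnion fun s _ => s.inits.finite_toSet).subset
    fun _ ⟨_, hs, hP⟩ => Set.mem_biUnion hs ((List.mem_inits _ _).2 hP)

lemma Set.Finite.branchingPrefixes {S : Set (List A)} (hS : S.Finite) :
    (branchingPrefixes S).Finite :=
  hS.setOf_exists_prefix.subset
    fun _ ⟨_, _, _, ⟨s, hs, ha⟩, _⟩ => ⟨s, hs, (List.prefix_append _ _).trans ha⟩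

lemma branchingPrefixes_eq_empty_of_isChain {S : Set (List A)}
    (hS : IsChain (· <+: ·) S) : branchingPrefixes S = ∅ := by
  refine Set.eq_empty_of_forall_notMem fun P ⟨a, b, hab, ⟨s, hs, ha⟩, ⟨t, ht, hb⟩⟩ => hab ?_
  rcases hS.total hs ht with hst | hts
  · exact eq_of_append_singleton_prefix (ha.trans hst) hb
  · exact eq_of_append_singleton_prefix ha (hb.trans hts)

lemma prefixMaximals_subsingleton_of_isChain {S : Set (List A)}
    (hS : IsChain (· <+: ·) S) : (prefixMaximals S).Subsingleton := by
  rintro P ⟨hP, hPmax⟩ Q ⟨hQ, hQmax⟩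
  rcases hS.total hP hQ with hPQ | hQP
  · exact hPmax Q hQ hPQ
  · exact (hQmax P hP hQP).symm

lemma exists_of_mem_branchingPrefixes_insert {S : Set (List A)} {t P : List A}
    (hP : P ∈ branchingPrefixes (insert t S)) (hP' : P ∉ branchingPrefixes S) :
    ∃ a b : A, a ≠ b ∧ P ++ [a] <+: t ∧ ∃ s ∈ S, P ++ [b] <+: s := by
  obtain ⟨a, b, hab, ⟨s, rfl | hs, ha⟩, ⟨s', rfl | hs', hb⟩⟩ := hP
  · exact absurd (eq_of_append_singleton_prefix ha hb) hab
  · exact ⟨a, b, hab, ha, s', hs', hb⟩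
  · exact ⟨b, a, hab.symm, hb, s, hs, ha⟩
  · exact absurd ⟨a, b, hab, ⟨s, hs, ha⟩, ⟨s', hs', hb⟩⟩ hP'

/-- Adding one string creates at most one new branching node: two new ones would both be
prefixes of `t`, and the longer one passes the branching letter of the shorter one on to an old
string. -/
lemma branchingPrefixes_insert_diff_subsingleton (S : Set (List A)) (t : List A) :
    (branchingPrefixes (insert t S) \ branchingPrefixes S).Subsingleton := by
  rintro P ⟨hP, hP'⟩ Q ⟨hQ, hQ'⟩
  wlog hle : P.length ≤ Q.length generalizing P Q
  · exact (this hQ hQ' hP hP' (by omega)).symm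
  obtain ⟨a, b, hab, hPt, s, hs, hPs⟩ := exists_of_mem_branchingPrefixes_insert hP hP'
  obtain ⟨c, _, _, hQt, s', hs', hQs'⟩ := exists_of_mem_branchingPrefixes_insert hQ hQ'
  have hQt' : Q <+: t := (List.prefix_append _ _).trans hQt
  have hPQ : P <+: Q :=
    List.prefix_of_prefix_length_le ((List.prefix_append _ _).trans hPt) hQt' hle
  by_contra hne
  have hlt : P.length < Q.length := lt_of_le_of_ne hle fun h => hne (hPQ.eq_of_length h)
  have hPaQ : P ++ [a] <+: Q :=
    List.prefix_of_prefix_length_le hPt hQt' (by simpa using hlt)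
  exact hP' ⟨a, b, hab, ⟨s', hs', hPaQ.trans ((List.prefix_append _ _).trans hQs')⟩,
    ⟨s, hs, hPs⟩⟩

lemma ncard_branchingPrefixes_le {S : Set (List A)} (hS : S.Finite) :
    (branchingPrefixes S).ncard ≤ S.ncard - 1 := by
  induction S, hS using Set.Finite.induction_on with
  | empty => simp [branchingPrefixes]
  | @insert t S ht hS ih =>
    rw [Set.ncard_insert_of_notMem ht hS, Nat.add_sub_cancel]
    rcases S.eq_empty_or_nonempty with rfl | hne
    · simp [branchingPrefixes_eq_empty_of_isChain Set.subsingleton_singleton.isChain]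
    have hpos : 0 < S.ncard := (Set.ncard_pos hS).2 hne
    calc (branchingPrefixes (insert t S)).ncard
        ≤ (branchingPrefixes (insert t S) \ branchingPrefixes S).ncard
          + (branchingPrefixes S).ncard :=
          Set.ncard_le_ncard_sdiff_add_ncard _ _ hS.branchingPrefixes
      _ ≤ 1 + (S.ncard - 1) :=
          add_le_add (branchingPrefixes_insert_diff_subsingleton S t).ncard_le_one ih
      _ = S.ncard := by omega

end PrefixTree

namespace LTree

variable {n : ℕ} {A : Type*}

lemma strUp_of_eq_zero (T : LTree n A) {v : Fin n} (h : v.val = 0) : T.strUp v = [] := by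
  rw [strUp, dif_pos h]

lemma strUp_of_ne_zero (T : LTree n A) {v : Fin n} (h : v.val ≠ 0) :
    T.strUp v = T.label v :: T.strUp (T.parent v) := by
  rw [strUp, dif_neg h]

lemma exists_label_eq_of_mem_strUp (T : LTree n A) {v : Fin n} {x : A} (hx : x ∈ T.strUp v) :
    ∃ u : Fin n, u.val ≠ 0 ∧ T.label u = x := by
  induction v using WellFoundedLT.induction with
  | _ v ih =>
    by_cases h : v.val = 0
    · simp [T.strUp_of_eq_zero h] at hx
    rw [T.strUp_of_ne_zero h, List.mem_cons] at hx
    rcases hx with rfl | hx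
    · exact ⟨v, h, rfl⟩
    · exact ih _ (T.hp v h) hx

lemma strUp_eq_replicate (T : LTree n A) {c : A} (hc : ∀ u : Fin n, u.val ≠ 0 → T.label u = c)
    (v : Fin n) : T.strUp v = List.replicate (T.strUp v).length c :=
  List.eq_replicate_iff.2 ⟨rfl, fun _ hx => by
    obtain ⟨u, hu, rfl⟩ := T.exists_label_eq_of_mem_strUp hx
    exact hc u hu⟩

lemma suffixB_eq_image (T : LTree n A) : T.SuffixB = T.strUp '' {v | v.val ≠ 0} := by
  ext s
  simp [SuffixB, eq_comm]

lemma finite_suffixB (T : LTree n A) : T.SuffixB.Finite := by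
  rw [suffixB_eq_image]
  exact Set.toFinite _ |>.image _

lemma ncard_suffixB_le (T : LTree n A) : T.SuffixB.ncard ≤ n - 1 := by
  rw [suffixB_eq_image]
  refine (Set.ncard_image_le (Set.toFinite _)).trans_eq ?_
  cases n with
  | zero => simp [Set.eq_empty_of_isEmpty]
  | succ m =>
    rw [Set.ncard_eq_toFinset_card']
    simp [Finset.filter_ne', Finset.card_erase_of_mem]

/-- The root of the suffix tree is unary only if all edges carry one letter, and then the
suffixes are powers of that letter. -/
lemma nil_mem_branchingPrefixes_or_isChain (T : LTree n A) :
    [] ∈ branchingPrefixes T.SuffixB ∨ IsChain (· <+: ·) T.SuffixB := by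
  by_cases h : ∃ u w : Fin n, u.val ≠ 0 ∧ w.val ≠ 0 ∧ T.label u ≠ T.label w
  · obtain ⟨u, w, hu, hw, huw⟩ := h
    refine .inl ⟨T.label u, T.label w, huw, ⟨_, ⟨u, hu, rfl⟩, ?_⟩, ⟨_, ⟨w, hw, rfl⟩, ?_⟩⟩
    · simp [T.strUp_of_ne_zero hu]
    · simp [T.strUp_of_ne_zero hw]
  push Not at h
  right
  rintro _ ⟨v, hv, rfl⟩ _ ⟨w, -, rfl⟩ -
  have hc : ∀ u : Fin n, u.val ≠ 0 → T.label u = T.label v := fun u hu => h u v hu hv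
  rw [T.strUp_eq_replicate hc v, T.strUp_eq_replicate hc w]
  rcases le_total (T.strUp v).length (T.strUp w).length with hle | hle
  · exact .inl (List.prefix_replicate_iff.2 (by simpa using hle))
  · exact .inr (List.prefix_replicate_iff.2 (by simpa using hle))

end LTree

lemma sTreeNodesB_subset_union {n : ℕ} {A : Type*} (T : LTree n A) :
    STreeNodesB T ⊆ branchingPrefixes T.SuffixB ∪ prefixMaximals T.SuffixB ∪ {[]} := by
  rintro P ⟨-, hP | hP | hP⟩
  · exact .inl (.inl hP)
  · exact .inl (.inr hP)
  · exact .inr hP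

/-- for any backward trie with `n ≥ 3` nodes, its suffix tree has
at most `2n - 3` nodes and at most `2n - 4` edges (one edge per non-root
node), independently of the alphabet size. -/
theorem stmt5 {n : ℕ} {A : Type*} (T : LTree n A) (hn : 3 ≤ n) :
    (STreeNodesB T).ncard ≤ 2 * n - 3 ∧
    (STreeNodesB T).ncard - 1 ≤ 2 * n - 4 := by
  have hS := T.finite_suffixB
  have hSn := T.ncard_suffixB_le
  have hM : (prefixMaximals T.SuffixB).ncard ≤ T.SuffixB.ncard :=
    Set.ncard_le_ncard (prefixMaximals_subset _) hS
  have hfin : (branchingPrefixes T.SuffixB ∪ prefixMaximals T.SuffixB ∪ {[]}).Finite :=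
    (hS.branchingPrefixes.union (hS.subset (prefixMaximals_subset _))).union
      (Set.finite_singleton _)
  have hnodes : (STreeNodesB T).ncard ≤ 2 * n - 3 := by
    refine (Set.ncard_le_ncard (sTreeNodesB_subset_union T) hfin).trans ?_
    rcases T.nil_mem_branchingPrefixes_or_isChain with hroot | hchain
    · rw [Set.union_singleton, Set.insert_eq_of_mem (.inl hroot)]
      calc _ ≤ (branchingPrefixes T.SuffixB).ncard + (prefixMaximals T.SuffixB).ncard :=
            Set.ncard_union_le _ _
        _ ≤ (T.SuffixB.ncard - 1) + T.SuffixB.ncard :=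
            add_le_add (ncard_branchingPrefixes_le hS) hM
        _ ≤ 2 * n - 3 := by omega
    · rw [branchingPrefixes_eq_empty_of_isChain hchain, Set.empty_union]
      calc _ ≤ (prefixMaximals T.SuffixB).ncard + ({[]} : Set (List A)).ncard :=
            Set.ncard_union_le _ _
        _ ≤ 1 + 1 :=
            add_le_add (prefixMaximals_subsingleton_of_isChain hchain).ncard_le_one
              (Set.ncard_singleton _).le
        _ ≤ 2 * n - 3 := by omega
  exact ⟨hnodes, by omega⟩
end

section
/- For every n and every σ with 3 ≤ σ ≤ n − 3, there exists a forward trie T_f with n nodes over an alphabet of size σ + 1 whose DAWG has at least σ(n − σ − 2) edges; in particular, choosing σ = Θ(n) gives a forward trie whose DAWG has Ω(n²) edges. -/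
/-! In the broom (a `$`-edge, then `e + 1` edges `a`, then `σ` leaf edges `bᵢ`), every string
`aᵏ` with `k ≤ e` is left-maximal, being preceded both by `a` and by `$`, and is followed by
every `bᵢ`; the `σ (e + 1)` pairs `(aᵏ, bᵢ)` are therefore distinct DAWG edges. Forward-trie
substrings are exactly the factors of root-to-node strings, so all the memberships needed are
read off the root-to-leaf strings `$ a^(e+1) bᵢ`. -/

namespace LTree

variable {n : ℕ} {A : Type*}

theorem exists_drop_strUp_eq (T : LTree n A) (j : ℕ) (v : Fin n) :
    ∃ u, (T.strUp v).drop j = T.strUp u := by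
  induction j generalizing v with
  | zero => exact ⟨v, rfl⟩
  | succ j ih =>
    by_cases hv : v.val = 0
    · exact ⟨v, by simp [T.strUp_of_val_eq_zero hv]⟩
    · simpa [T.strUp_of_val_ne_zero hv] using ih (T.parent v)

theorem mem_substrD_iff (T : LTree n A) {s : List A} :
    s ∈ T.SubstrD ↔ ∃ v, s <:+: (T.strUp v).reverse := by
  constructor
  · rintro ⟨v, m, rfl⟩
    exact ⟨v, List.reverse_infix.mpr (List.take_prefix m _).isInfix⟩
  · rintro ⟨v, hs⟩
    rw [← List.reverse_reverse s, List.reverse_infix, List.infix_iff_prefix_suffix] at hs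
    obtain ⟨t, hst, hts⟩ := hs
    obtain ⟨u, hu⟩ := T.exists_drop_strUp_eq ((T.strUp v).length - t.length) v
    rw [List.suffix_iff_eq_drop.mp hts, hu] at hst
    exact ⟨u, s.length, by rw [← List.length_reverse, ← List.prefix_iff_eq_take.mp hst,
      List.reverse_reverse]⟩

theorem finite_substrD [Finite A] (T : LTree n A) : T.SubstrD.Finite := by
  refine (Set.finite_iUnion fun v => (T.strUp v).reverse.sublists.finite_toSet).subset ?_
  intro s hs
  obtain ⟨v, hv⟩ := T.mem_substrD_iff.mp hs
  exact Set.mem_iUnion.mpr ⟨v, List.mem_sublists.mpr hv.sublist⟩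

/-- The pair `(X, c)` stands for the DAWG edge labeled `c` out of the class whose longest
member is the left-maximal string `X`. -/
def dawgEdges (T : LTree n A) : Set (List A × A) :=
  {p | p.1 ∈ T.SubstrD ∧ T.leftMaximalF p.1 ∧ p.1 ++ [p.2] ∈ T.SubstrD}

theorem finite_dawgEdges [Finite A] (T : LTree n A) : T.dawgEdges.Finite :=
  (T.finite_substrD.prod Set.finite_univ).subset fun _ hp => ⟨hp.1, trivial⟩

end LTree

section Broom

open LTree

variable (σ e : ℕ)

/-- The broom on `σ + e + 3` nodes: node `1` hangs from the root by the edge `$ = Fin.last σ`,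
nodes `2, …, e + 2` continue it by a path of `a = 0`-edges, and node `e + 3 + i` is a leaf
below node `e + 2` reached by the edge `Fin.castSucc i` (for `i = 0` again an `a`-edge). -/
def broom : LTree (σ + e + 3) (Fin (σ + 1)) where
  parent v := ⟨min (v.val - 1) (e + 2), by omega⟩
  label v := if v.val = 1 then Fin.last σ
    else if v.val ≤ e + 2 then 0 else ⟨v.val - (e + 3), by have := v.isLt; omega⟩
  hp v hv := by simp only; omega

theorem broom_strUp_path {k : ℕ} (hk : k ≤ e + 1) :
    (broom σ e).strUp ⟨k + 1, by omega⟩ = List.replicate k 0 ++ [Fin.last σ] := by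
  induction k with
  | zero =>
    rw [strUp_of_val_ne_zero _ one_ne_zero, strUp_of_val_eq_zero _ (by simp [broom])]
    simp [broom]
  | succ k ih =>
    have hparent : (broom σ e).parent ⟨k + 2, by omega⟩ = ⟨k + 1, by omega⟩ := by
      ext; simp only [broom]; omega
    have hlabel : (broom σ e).label ⟨k + 2, by omega⟩ = 0 := by
      simp only [broom]; rw [if_neg (by omega), if_pos (by omega)]
    rw [strUp_of_val_ne_zero _ (by simp), hparent, hlabel, ih (by omega), List.replicate_succ,
      List.cons_append]

theorem broom_label_val_of_lt {v : Fin (σ + e + 3)} (hv : e + 2 < v.val) :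
    ((broom σ e).label v).val = v.val - (e + 3) := by
  simp only [broom]
  rw [if_neg (by omega), if_neg (by omega)]

theorem broom_strUp_leaf (i : Fin σ) :
    (broom σ e).strUp ⟨e + 3 + i, by omega⟩ =
      i.castSucc :: (List.replicate (e + 1) 0 ++ [Fin.last σ]) := by
  have hparent : (broom σ e).parent ⟨e + 3 + i, by omega⟩ = ⟨e + 1 + 1, by omega⟩ := by
    ext; simp only [broom]; omega
  have hlabel : (broom σ e).label ⟨e + 3 + i, by omega⟩ = i.castSucc := by
    ext; rw [broom_label_val_of_lt σ e (by simp only; omega)]; simp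
  rw [strUp_of_val_ne_zero _ (by simp), hparent, hlabel, broom_strUp_path σ e le_rfl]

theorem broom_isTrie : (broom σ e).isTrie := by
  intro u v hu hv hparent hlabel
  have hmin : min (u.val - 1) (e + 2) = min (v.val - 1) (e + 2) := congrArg Fin.val hparent
  ext
  by_cases hleaf : e + 2 < u.val ∧ e + 2 < v.val
  · have := congrArg Fin.val hlabel
    rw [broom_label_val_of_lt σ e hleaf.1, broom_label_val_of_lt σ e hleaf.2] at this
    omega
  · omega

theorem replicate_mem_dawgEdges_broom {k : ℕ} (hk : k ≤ e) (i : Fin σ) :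
    (List.replicate k 0, i.castSucc) ∈ (broom σ e).dawgEdges := by
  obtain ⟨d, rfl⟩ : ∃ d, e = k + d := ⟨e - k, by omega⟩
  have hfactor : ∀ s, s <:+: Fin.last σ :: (List.replicate (k + d + 1) 0 ++ [i.castSucc]) →
      s ∈ (broom σ (k + d)).SubstrD := fun s hs =>
    (mem_substrD_iff _).mpr ⟨⟨k + d + 3 + i, by omega⟩, by simpa [broom_strUp_leaf] using hs⟩
  have : NeZero σ := ⟨i.pos.ne'⟩
  have hne : (0 : Fin (σ + 1)) ≠ Fin.last σ := Fin.last_pos'.ne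
  refine ⟨hfactor _ ⟨[Fin.last σ], List.replicate (d + 1) 0 ++ [i.castSucc], ?_⟩,
    Or.inl ⟨0, Fin.last σ, hne, hfactor _ ⟨[Fin.last σ], List.replicate d 0 ++ [i.castSucc], ?_⟩,
      hfactor _ ⟨[], List.replicate (d + 1) 0 ++ [i.castSucc], ?_⟩⟩,
    hfactor _ ⟨Fin.last σ :: List.replicate (d + 1) 0, [], ?_⟩⟩
  all_goals
    simp only [List.cons_append, List.nil_append, List.append_nil, List.cons.injEq, true_and,
      ← List.append_assoc, List.replicate_append_replicate, ← List.replicate_succ]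
    congr 2 <;> omega

theorem mul_le_ncard_dawgEdges_broom : σ * (e + 1) ≤ (broom σ e).dawgEdges.ncard :=
  calc σ * (e + 1) = (Set.univ : Set (Fin (e + 1) × Fin σ)).ncard := by
        simp [Nat.card_eq_fintype_card, mul_comm]
    _ ≤ (broom σ e).dawgEdges.ncard :=
      Set.ncard_le_ncard_of_injOn
        (Prod.map (fun k : Fin (e + 1) => List.replicate k 0) Fin.castSucc)
        (fun p _ => replicate_mem_dawgEdges_broom σ e (Nat.lt_succ_iff.mp p.1.isLt) p.2)
        (((List.replicate_left_injective 0).comp Fin.val_injective).prodMap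
          (Fin.castSucc_injective σ)).injOn
        (finite_dawgEdges _)

end Broom

/-- for every `n` and `σ` with `3 ≤ σ ≤ n - 3`, there is a
forward trie with `n` nodes over an alphabet of size `σ + 1` (the broom:
a path of `a`-edges ending in `σ` distinctly labeled edges) whose DAWG has at
least `σ(n - σ - 2)` edges; the edges of `DAWG(T_f)` out of a node are the
pairs `(X, c)` where `X` is the longest (left-maximal) member of the node's
class and `X ++ [c] ∈ Substr(T_f)`. Choosing `σ = Θ(n)` gives `Ω(n²)` edges. -/
theorem stmt10 :
    ∀ n σ : ℕ, 3 ≤ σ → σ ≤ n - 3 →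
      ∃ T : LTree n (Fin (σ + 1)), T.isTrie ∧
        σ * (n - σ - 2) ≤
          {p : List (Fin (σ + 1)) × Fin (σ + 1) |
            p.1 ∈ T.SubstrD ∧ T.leftMaximalF p.1 ∧
            p.1 ++ [p.2] ∈ T.SubstrD}.ncard := by
  intro n σ _ hn
  obtain ⟨e, rfl⟩ : ∃ e, n = σ + e + 3 := ⟨n - σ - 3, by omega⟩
  refine ⟨broom σ e, broom_isTrie σ e, ?_⟩
  rw [show σ + e + 3 - σ - 2 = e + 1 by omega]
  exact mul_le_ncard_dawgEdges_broom σ e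
end

section
/- For any forward trie T_f with n ≥ 3 nodes over an alphabet of size σ, the DAWG of T_f has at most 2n − 3 nodes and hence at most σ(2n − 3) = O(σn) edges. -/
open Finset

lemma laminar_bound {α : Type*} [DecidableEq α] :
    ∀ (k : ℕ) (S : Finset α) (F : Finset (Finset α)), S.card = k →
    (∀ C ∈ F, C ⊆ S) → (∀ C ∈ F, 2 ≤ C.card) →
    (∀ C ∈ F, ∀ D ∈ F, C ⊆ D ∨ D ⊆ C ∨ Disjoint C D) →
    F.Nonempty → F.card + 1 ≤ S.card := by
  intro k
  induction k using Nat.strong_induction_on with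
  | _ k ih =>
    intro S F hk hsub hcard hlam hne
    obtain ⟨C, hC, hmin⟩ := F.exists_min_image Finset.card hne
    -- C has minimal card
    have hCsub : ∀ D ∈ F, ¬ Disjoint C D → D ≠ C → C ⊆ D := by
      intro D hD hdisj hne'
      rcases hlam C hC D hD with h | h | h
      · exact h
      · exact absurd (Finset.eq_of_subset_of_card_le h (hmin D hD)) hne'
      · exact absurd h hdisj
    obtain ⟨x, hx, y, hy, hxy⟩ := Finset.one_lt_card.mp (hcard C hC)
    by_cases hF' : (F.erase C).Nonempty
    · -- inductive step
      set F' := (F.erase C).image (fun D => D.erase x) with hF'def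
      have hinj : Set.InjOn (fun D : Finset α => D.erase x) ↑(F.erase C) := by
        intro C1 h1 C2 h2 he
        simp only at he
        have h1' := Finset.mem_of_mem_erase h1
        have h2' := Finset.mem_of_mem_erase h2
        by_contra hne12
        -- wlog helper
        have key : ∀ D1 ∈ F.erase C, ∀ D2 ∈ F.erase C, D1.erase x = D2.erase x →
            x ∈ D1 → x ∉ D2 → False := by
          intro D1 hD1 D2 hD2 heq hx1 hx2
          have hD1' := Finset.mem_of_mem_erase hD1
          have hD2' := Finset.mem_of_mem_erase hD2
          have hCD1 : C ⊆ D1 := by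
            apply hCsub D1 hD1' _ (Finset.ne_of_mem_erase hD1)
            exact Finset.not_disjoint_iff.mpr ⟨x, hx, hx1⟩
          have hyD2 : y ∈ D2 := by
            have : y ∈ D1.erase x := Finset.mem_erase.mpr ⟨hxy.symm, hCD1 hy⟩
            rw [heq] at this; exact Finset.mem_of_mem_erase this
          have hCD2 : C ⊆ D2 := by
            apply hCsub D2 hD2' _ (Finset.ne_of_mem_erase hD2)
            exact Finset.not_disjoint_iff.mpr ⟨y, hy, hyD2⟩
          exact hx2 (hCD2 hx)
        by_cases hx1 : x ∈ C1 <;> by_cases hx2 : x ∈ C2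
        · apply hne12
          ext z
          by_cases hz : z = x
          · subst hz; simp [hx1, hx2]
          · constructor
            · intro h; have : z ∈ C1.erase x := Finset.mem_erase.mpr ⟨hz, h⟩
              rw [he] at this; exact Finset.mem_of_mem_erase this
            · intro h; have : z ∈ C2.erase x := Finset.mem_erase.mpr ⟨hz, h⟩
              rw [← he] at this; exact Finset.mem_of_mem_erase this
        · exact key C1 h1 C2 h2 he hx1 hx2
        · exact key C2 h2 C1 h1 he.symm hx2 hx1
        · apply hne12
          rw [← Finset.erase_eq_of_notMem hx1, ← Finset.erase_eq_of_notMem hx2, he]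
      have hxS : x ∈ S := hsub C hC hx
      have hkpos0 : 1 ≤ k := by
        rw [← hk]; exact Finset.card_pos.mpr ⟨x, hxS⟩
      have hScard : (S.erase x).card < k := by
        rw [Finset.card_erase_of_mem hxS, hk]
        omega
      have hk' : (S.erase x).card = (S.erase x).card := rfl
      have hstep := ih (S.erase x).card hScard (S.erase x) F' rfl ?_ ?_ ?_ ?_
      · have hcardF' : F'.card = (F.erase C).card := Finset.card_image_of_injOn hinj
        have : F.card = (F.erase C).card + 1 := by
          rw [Finset.card_erase_of_mem hC]
          have := Finset.card_pos.mpr hne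
          omega
        rw [Finset.card_erase_of_mem hxS, hk] at hstep
        have hkpos : 1 ≤ k := by
          rw [← hk]; exact Finset.card_pos.mpr ⟨x, hxS⟩
        rw [hk]
        omega
      · intro D hD
        simp only [hF'def, Finset.mem_image] at hD
        obtain ⟨D0, hD0, rfl⟩ := hD
        exact Finset.erase_subset_erase x (hsub D0 (Finset.mem_of_mem_erase hD0))
      · intro D hD
        simp only [hF'def, Finset.mem_image] at hD
        obtain ⟨D0, hD0, rfl⟩ := hD
        by_cases hxD : x ∈ D0
        · have hCD : C ⊆ D0 := by
            apply hCsub D0 (Finset.mem_of_mem_erase hD0) _ (Finset.ne_of_mem_erase hD0)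
            exact Finset.not_disjoint_iff.mpr ⟨x, hx, hxD⟩
          have : C ⊂ D0 := Finset.ssubset_iff_subset_ne.mpr ⟨hCD, (Finset.ne_of_mem_erase hD0).symm⟩
          have h3 : 3 ≤ D0.card := by
            have := Finset.card_lt_card this
            have := hcard C hC
            omega
          rw [Finset.card_erase_of_mem hxD]
          omega
        · rw [Finset.erase_eq_of_notMem hxD]
          exact hcard D0 (Finset.mem_of_mem_erase hD0)
      · intro D1 hD1 D2 hD2
        simp only [hF'def, Finset.mem_image] at hD1 hD2
        obtain ⟨E1, hE1, rfl⟩ := hD1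
        obtain ⟨E2, hE2, rfl⟩ := hD2
        rcases hlam E1 (Finset.mem_of_mem_erase hE1) E2 (Finset.mem_of_mem_erase hE2) with h | h | h
        · exact Or.inl (Finset.erase_subset_erase x h)
        · exact Or.inr (Or.inl (Finset.erase_subset_erase x h))
        · exact Or.inr (Or.inr (h.mono (Finset.erase_subset x E1) (Finset.erase_subset x E2)))
      · obtain ⟨D, hD⟩ := hF'
        exact ⟨D.erase x, Finset.mem_image_of_mem _ hD⟩
    · -- F = {C}
      have hFC : F = {C} := by
        apply Finset.eq_singleton_iff_unique_mem.mpr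
        refine ⟨hC, fun D hD => ?_⟩
        by_contra hne'
        exact hF' ⟨D, Finset.mem_erase.mpr ⟨hne', hD⟩⟩
      rw [hFC, Finset.card_singleton]
      calc 2 ≤ C.card := hcard C hC
        _ ≤ S.card := Finset.card_le_card (hsub C hC)

lemma char_eq_of_prefix {α : Type*} {Y l : List α} {a b : α}
    (h1 : Y ++ [a] <+: l) (h2 : Y ++ [b] <+: l) : a = b := by
  have h := List.prefix_of_prefix_length_le h1 h2 (by simp)
  have h' := h.eq_of_length (by simp)
  simpa using h'

lemma branch_bound {α : Type*} [DecidableEq α] (L : Finset (List α))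
    (hε : [] ∈ L) (a₀ : α) (ha : [a₀] ∈ L) (B : Finset (List α))
    (hB : ∀ Y ∈ B, ∃ a b, a ≠ b ∧ (∃ l ∈ L, Y ++ [a] <+: l) ∧ (∃ l ∈ L, Y ++ [b] <+: l)) :
    (L ∪ B).card ≤ L.card + (L.card - 3) := by
  classical
  set c : List α → Finset (List α) := fun Y => L.filter (fun l => Y <+: l ∧ Y ≠ l) with hc
  -- membership helper
  have hmemc : ∀ Y l, l ∈ c Y ↔ l ∈ L ∧ Y <+: l ∧ Y ≠ l := by
    intro Y l; simp [hc]
  -- elements of c from a branching witness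
  have hwit : ∀ Y a, (∃ l ∈ L, Y ++ [a] <+: l) → ∃ l ∈ c Y, Y ++ [a] <+: l := by
    intro Y a ⟨l, hl, hpre⟩
    refine ⟨l, (hmemc Y l).mpr ⟨hl, (List.prefix_append Y [a]).trans hpre, ?_⟩, hpre⟩
    intro h
    have := hpre.length_le
    rw [← h] at this
    simp at this
  -- each c Y (Y branching) has card ≥ 2
  have hcard2 : ∀ Y ∈ B, 2 ≤ (c Y).card := by
    intro Y hY
    obtain ⟨a, b, hab, hA, hBw⟩ := hB Y hY
    obtain ⟨l1, hl1, hp1⟩ := hwit Y a hA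
    obtain ⟨l2, hl2, hp2⟩ := hwit Y b hBw
    refine Finset.one_lt_card.mpr ⟨l1, hl1, l2, hl2, ?_⟩
    intro h
    exact hab (char_eq_of_prefix hp1 (h ▸ hp2))
  -- laminar
  have hlam : ∀ Y Y', c Y ⊆ c Y' ∨ c Y' ⊆ c Y ∨ Disjoint (c Y) (c Y') := by
    have key : ∀ Y Y' : List α, Y <+: Y' → c Y' ⊆ c Y := by
      intro Y Y' hp l hl
      rw [hmemc] at hl ⊢
      refine ⟨hl.1, hp.trans hl.2.1, ?_⟩
      intro h
      subst h
      have h1 := hl.2.1.length_le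
      have h2 := hp.length_le
      have : Y = Y' := hp.eq_of_length (le_antisymm h2 h1)
      exact hl.2.2 this.symm
    intro Y Y'
    by_cases hd : Disjoint (c Y) (c Y')
    · exact Or.inr (Or.inr hd)
    · obtain ⟨l, hl1, hl2⟩ := Finset.not_disjoint_iff.mp hd
      rw [hmemc] at hl1 hl2
      rcases List.prefix_or_prefix_of_prefix hl1.2.1 hl2.2.1 with h | h
      · exact Or.inr (Or.inl (key Y Y' h))
      · exact Or.inl (key Y' Y h)
  -- injectivity of c on branching strings
  have hinj : ∀ Y ∈ B, ∀ Y' ∈ B, c Y = c Y' → Y = Y' := by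
    have key : ∀ Y ∈ B, ∀ Y' : List α, c Y = c Y' → Y <+: Y' → Y = Y' := by
      intro Y hY Y' hceq hp
      by_contra hne
      obtain ⟨t, ht⟩ := hp
      match t, ht with
      | [], ht => exact hne (by simpa using ht)
      | c₀ :: t', ht =>
        obtain ⟨a, b, hab, hA, hBw⟩ := hB Y hY
        have hYc₀ : Y ++ [c₀] <+: Y' := by
          rw [← ht]
          exact ⟨t', by simp⟩
        -- one of a,b differs from c₀
        have : ∃ d, d ≠ c₀ ∧ ∃ l ∈ c Y, Y ++ [d] <+: l := by
          by_cases hac : a = c₀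
          · exact ⟨b, fun h => hab (hac ▸ h ▸ rfl), hwit Y b hBw⟩
          · exact ⟨a, hac, hwit Y a hA⟩
        obtain ⟨d, hd, l, hl, hpl⟩ := this
        have hl' : l ∈ c Y' := hceq ▸ hl
        rw [hmemc] at hl'
        exact hd (char_eq_of_prefix hpl (hYc₀.trans hl'.2.1))
    intro Y hY Y' hY' hceq
    have hne : (c Y).Nonempty := Finset.card_pos.mp (by have := hcard2 Y hY; omega)
    obtain ⟨l, hl⟩ := hne
    have hl' : l ∈ c Y' := hceq ▸ hl
    rw [hmemc] at hl hl'
    rcases List.prefix_or_prefix_of_prefix hl.2.1 hl'.2.1 with h | h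
    · exact key Y hY Y' hceq h
    · exact (key Y' hY' Y hceq.symm h).symm
  -- every c Y for Y ∈ B \ L avoids [] and [a₀]
  have hS : ∀ Y ∈ B \ L, c Y ⊆ (L.erase []).erase [a₀] := by
    intro Y hY l hl
    have hYne : Y ≠ [] := by
      intro h
      exact (Finset.mem_sdiff.mp hY).2 (h ▸ hε)
    rw [hmemc] at hl
    refine Finset.mem_erase.mpr ⟨?_, Finset.mem_erase.mpr ⟨?_, hl.1⟩⟩
    · intro h
      subst h
      have hlen : Y.length = ([a₀] : List α).length := by
        have h1 := hl.2.1.length_le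
        have h2 : 0 < Y.length := List.length_pos_iff.mpr hYne
        simp only [List.length_singleton] at h1 ⊢
        omega
      exact hl.2.2 (hl.2.1.eq_of_length hlen)
    · intro h
      subst h
      exact hYne (by simpa using hl.2.1)
  have hBL : (B \ L).card ≤ L.card - 3 := by
    rcases (B \ L).eq_empty_or_nonempty with h | h
    · simp [h]
    · have hF : ((B \ L).image c).Nonempty := h.image c
      have hinj' : Set.InjOn c ↑(B \ L) := by
        intro Y hY Y' hY' heq
        exact hinj Y (Finset.mem_sdiff.mp (Finset.mem_coe.mp hY)).1
          Y' (Finset.mem_sdiff.mp (Finset.mem_coe.mp hY')).1 heq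
      have hbound := laminar_bound ((L.erase []).erase [a₀]).card ((L.erase []).erase [a₀])
        ((B \ L).image c) rfl ?_ ?_ ?_ hF
      · have hcimg : ((B \ L).image c).card = (B \ L).card := Finset.card_image_of_injOn hinj'
        have h1 : ([a₀] : List α) ∈ L.erase [] := Finset.mem_erase.mpr ⟨by simp, ha⟩
        have h2 : ((L.erase []).erase [a₀]).card = L.card - 1 - 1 := by
          rw [Finset.card_erase_of_mem h1, Finset.card_erase_of_mem hε]
        rw [hcimg, h2] at hbound
        omega
      · intro C hC
        obtain ⟨Y, hY, rfl⟩ := Finset.mem_image.mp hC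
        exact hS Y hY
      · intro C hC
        obtain ⟨Y, hY, rfl⟩ := Finset.mem_image.mp hC
        exact hcard2 Y (Finset.mem_sdiff.mp hY).1
      · intro C hC D hD
        obtain ⟨Y, hY, rfl⟩ := Finset.mem_image.mp hC
        obtain ⟨Y', hY', rfl⟩ := Finset.mem_image.mp hD
        exact hlam Y Y'
  calc (L ∪ B).card = (L ∪ (B \ L)).card := by rw [Finset.union_sdiff_self_eq_union]
    _ ≤ L.card + (B \ L).card := Finset.card_union_le _ _
    _ ≤ L.card + (L.card - 3) := by omega


section
variable {n : ℕ} {A : Type*}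

lemma strUp_eq_nil (T : LTree n A) (v : Fin n) (h : v.val = 0) : T.strUp v = [] := by
  rw [LTree.strUp]; simp [h]

lemma mem_SubstrU_iff (T : LTree n A) (s : List A) :
    s ∈ T.SubstrU ↔ ∃ v : Fin n, s <+: T.strUp v := by
  constructor
  · rintro ⟨v, m, rfl⟩; exact ⟨v, List.take_prefix m _⟩
  · rintro ⟨v, h⟩; exact ⟨v, s.length, List.prefix_iff_eq_take.mp h⟩

lemma mem_SubstrD_iff (T : LTree n A) (s : List A) :
    s ∈ T.SubstrD ↔ s.reverse ∈ T.SubstrU := by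
  constructor
  · rintro ⟨v, m, rfl⟩; exact ⟨v, m, by simp⟩
  · rintro ⟨v, m, h⟩; exact ⟨v, m, by rw [← h, List.reverse_reverse]⟩

end
/-- for any forward trie with `n ≥ 3` nodes over an alphabet of
size `σ`, the DAWG has at most `2n - 3` nodes (the left-maximal substrings)
and hence at most `σ(2n - 3)` edges. -/
theorem stmt11 {n : ℕ} {A : Type*} [Fintype A] (T : LTree n A) (hn : 3 ≤ n) :
    {X | X ∈ T.SubstrD ∧ T.leftMaximalF X}.ncard ≤ 2 * n - 3 ∧
    {p : List A × A | p.1 ∈ T.SubstrD ∧ T.leftMaximalF p.1 ∧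
        p.1 ++ [p.2] ∈ T.SubstrD}.ncard ≤ Fintype.card A * (2 * n - 3) := by
  classical
  have h0 : (0:ℕ) < n := by omega
  have h1 : (1:ℕ) < n := by omega
  set L : Finset (List A) := Finset.image T.strUp Finset.univ with hLdef
  have hLmem : ∀ v : Fin n, T.strUp v ∈ L :=
    fun v => Finset.mem_image_of_mem _ (Finset.mem_univ v)
  have hε : [] ∈ L := by
    have h := strUp_eq_nil T ⟨0, h0⟩ rfl
    rw [← h]; exact hLmem _
  have hone : T.strUp ⟨1, h1⟩ = [T.label ⟨1, h1⟩] := by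
    rw [LTree.strUp, dif_neg (by simp : ¬((⟨1, h1⟩ : Fin n) : ℕ) = 0)]
    have hpv : (T.parent ⟨1, h1⟩ : ℕ) = 0 := by
      have h := T.hp ⟨1, h1⟩ (by simp)
      have hv1 : ((⟨1, h1⟩ : Fin n) : ℕ) = 1 := rfl
      rw [hv1] at h
      omega
    rw [strUp_eq_nil T _ hpv]
  have ha : [T.label ⟨1, h1⟩] ∈ L := hone ▸ hLmem _
  set U : Finset (List A) := L.biUnion (fun l => l.inits.toFinset) with hUdef
  have hUmem : ∀ s, s ∈ U ↔ s ∈ T.SubstrU := by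
    intro s
    rw [mem_SubstrU_iff]
    simp only [hUdef, Finset.mem_biUnion, List.mem_toFinset, List.mem_inits, hLdef,
      Finset.mem_image, Finset.mem_univ, true_and]
    constructor
    · rintro ⟨l, ⟨v, rfl⟩, h⟩; exact ⟨v, h⟩
    · rintro ⟨v, h⟩; exact ⟨T.strUp v, ⟨v, rfl⟩, h⟩
  set Bf : Finset (List A) :=
    U.filter (fun Y => ∃ a b : A, a ≠ b ∧ Y ++ [a] ∈ T.SubstrU ∧ Y ++ [b] ∈ T.SubstrU)
    with hBdef
  set N : Finset (List A) := (L ∪ Bf).image List.reverse with hNdef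
  have hNcard : N.card ≤ 2 * n - 3 := by
    have h1c : (L ∪ Bf).card ≤ L.card + (L.card - 3) := by
      refine branch_bound L hε _ ha Bf ?_
      intro Y hY
      obtain ⟨a, b, hab, hA, hB⟩ := (Finset.mem_filter.mp (hBdef ▸ hY)).2
      obtain ⟨v, hv⟩ := (mem_SubstrU_iff T _).mp hA
      obtain ⟨w, hw⟩ := (mem_SubstrU_iff T _).mp hB
      exact ⟨a, b, hab, ⟨T.strUp v, hLmem v, hv⟩, ⟨T.strUp w, hLmem w, hw⟩⟩
    have hLn : L.card ≤ n := by
      calc L.card ≤ (Finset.univ : Finset (Fin n)).card := Finset.card_image_le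
        _ = n := by simp
    calc N.card ≤ (L ∪ Bf).card := Finset.card_image_le
      _ ≤ L.card + (L.card - 3) := h1c
      _ ≤ 2 * n - 3 := by omega
  have hset : {X | X ∈ T.SubstrD ∧ T.leftMaximalF X} = ↑N := by
    ext X
    simp only [Set.mem_setOf_eq, Finset.mem_coe]
    constructor
    · rintro ⟨hXD, hmax⟩
      have hrev : X.reverse ∈ U := (hUmem _).mpr ((mem_SubstrD_iff T X).mp hXD)
      refine hNdef ▸ Finset.mem_image.mpr ⟨X.reverse, ?_, List.reverse_reverse X⟩
      rcases hmax with ⟨a, b, hab, hA, hB⟩ | ⟨v, hv⟩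
      · refine Finset.mem_union_right _ (hBdef ▸ Finset.mem_filter.mpr ⟨hrev, a, b, hab, ?_, ?_⟩)
        · have h := (mem_SubstrD_iff T _).mp hA
          simpa using h
        · have h := (mem_SubstrD_iff T _).mp hB
          simpa using h
      · refine Finset.mem_union_left _ ?_
        rw [hv, List.reverse_reverse]
        exact hLmem v
    · intro hX
      obtain ⟨Y, hY, rfl⟩ := Finset.mem_image.mp (hNdef ▸ hX)
      rcases Finset.mem_union.mp hY with h | h
      · obtain ⟨v, _, rfl⟩ := Finset.mem_image.mp (hLdef ▸ h)
        refine ⟨?_, Or.inr ⟨v, rfl⟩⟩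
        rw [mem_SubstrD_iff, List.reverse_reverse]
        exact (mem_SubstrU_iff T _).mpr ⟨v, List.prefix_refl _⟩
      · obtain ⟨hYU, a, b, hab, hA, hB⟩ := Finset.mem_filter.mp (hBdef ▸ h)
        have hXD : Y.reverse ∈ T.SubstrD := by
          rw [mem_SubstrD_iff, List.reverse_reverse]
          exact (hUmem _).mp hYU
        refine ⟨hXD, Or.inl ⟨a, b, hab, ?_, ?_⟩⟩
        · rw [mem_SubstrD_iff]; simpa using hA
        · rw [mem_SubstrD_iff]; simpa using hB
  constructor
  · rw [hset, Set.ncard_coe_finset]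
    exact hNcard
  · have hsub : {p : List A × A | p.1 ∈ T.SubstrD ∧ T.leftMaximalF p.1 ∧
        p.1 ++ [p.2] ∈ T.SubstrD} ⊆ ↑(N ×ˢ (Finset.univ : Finset A)) := by
      rintro ⟨X, a⟩ ⟨hp1, hp2, _⟩
      have hX : X ∈ {X | X ∈ T.SubstrD ∧ T.leftMaximalF X} := ⟨hp1, hp2⟩
      rw [hset] at hX
      exact Finset.mem_coe.mpr (Finset.mem_product.mpr ⟨hX, Finset.mem_univ a⟩)
    calc {p : List A × A | p.1 ∈ T.SubstrD ∧ T.leftMaximalF p.1 ∧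
          p.1 ++ [p.2] ∈ T.SubstrD}.ncard
        ≤ (↑(N ×ˢ (Finset.univ : Finset A)) : Set (List A × A)).ncard :=
          Set.ncard_le_ncard hsub (Finset.finite_toSet _)
      _ = N.card * Fintype.card A := by
          rw [Set.ncard_coe_finset, Finset.card_product, Finset.card_univ]
      _ ≤ Fintype.card A * (2 * n - 3) := by
          rw [mul_comm]
          exact Nat.mul_le_mul_left _ hNcard
end

section
/- For any forward trie T_f with n nodes and its backward trie T_b, the number of nodes of CDAWG(T_f) equals the number of nodes of CDAWG(T_b); moreover X is the longest string of a CDAWG(T_f) node if and only if reverse(X) is the longest string of a CDAWG(T_b) node. -/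
/-- `X` is the longest string (i.e. a maximal substring) of a
node of `CDAWG(T_f)` iff `reverse X` is the longest string of a node of
`CDAWG(T_b)`; consequently the two CDAWGs have equally many nodes. -/
theorem stmt14 {n : ℕ} {A : Type*} (T : LTree n A) :
    (∀ X : List A,
      (X ∈ T.SubstrD ∧ T.leftMaximalF X ∧ T.rightMaximalF X) ↔
      (X.reverse ∈ T.SubstrU ∧ T.leftMaximalB X.reverse ∧
        T.rightMaximalB X.reverse)) ∧
    {X | X ∈ T.SubstrD ∧ T.leftMaximalF X ∧ T.rightMaximalF X}.ncard =
      {Y | Y ∈ T.SubstrU ∧ T.leftMaximalB Y ∧ T.rightMaximalB Y}.ncard := by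
  have hsub : ∀ X : List A, X ∈ T.SubstrD ↔ X.reverse ∈ T.SubstrU := by
    intro X
    constructor
    · rintro ⟨v, m, rfl⟩; exact ⟨v, m, by simp⟩
    · rintro ⟨v, m, h⟩
      exact ⟨v, m, by rw [← h, List.reverse_reverse]⟩
  have hrev : ∀ X : List A, (∃ v : Fin n, T.isLeaf v ∧ ∃ m : ℕ,
      X = ((T.strUp v).take m).reverse) ↔ (∃ v : Fin n, T.isLeaf v ∧ ∃ m : ℕ,
      X.reverse = (T.strUp v).take m) := by
    intro X
    constructor
    · rintro ⟨v, hv, m, rfl⟩; exact ⟨v, hv, m, by simp⟩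
    · rintro ⟨v, hv, m, h⟩; exact ⟨v, hv, m, by rw [← h, List.reverse_reverse]⟩
  have hiff : ∀ X : List A,
      (X ∈ T.SubstrD ∧ T.leftMaximalF X ∧ T.rightMaximalF X) ↔
      (X.reverse ∈ T.SubstrU ∧ T.leftMaximalB X.reverse ∧
        T.rightMaximalB X.reverse) := by
    intro X
    rw [hsub X]
    refine and_congr_right fun _ => ?_
    rw [and_comm]
    refine and_congr ?_ ?_
    · unfold LTree.rightMaximalF LTree.leftMaximalB
      refine or_congr ?_ (hrev X)
      constructor
      · rintro ⟨a, b, hab, ha, hb⟩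
        refine ⟨a, b, hab, ?_, ?_⟩
        · have := (hsub (X ++ [a])).mp ha; simpa using this
        · have := (hsub (X ++ [b])).mp hb; simpa using this
      · rintro ⟨a, b, hab, ha, hb⟩
        refine ⟨a, b, hab, (hsub (X ++ [a])).mpr (by simpa using ha),
          (hsub (X ++ [b])).mpr (by simpa using hb)⟩
    · unfold LTree.leftMaximalF LTree.rightMaximalB
      refine or_congr ?_ ?_
      · constructor
        · rintro ⟨a, b, hab, ha, hb⟩
          refine ⟨a, b, hab, ?_, ?_⟩
          · have := (hsub (a :: X)).mp ha; simpa using this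
          · have := (hsub (b :: X)).mp hb; simpa using this
        · rintro ⟨a, b, hab, ha, hb⟩
          refine ⟨a, b, hab, (hsub (a :: X)).mpr (by simpa using ha),
            (hsub (b :: X)).mpr (by simpa using hb)⟩
      · constructor
        · rintro ⟨v, rfl⟩; exact ⟨v, by simp⟩
        · rintro ⟨v, h⟩; exact ⟨v, by rw [← h, List.reverse_reverse]⟩
  refine ⟨hiff, ?_⟩
  have hset : {Y | Y ∈ T.SubstrU ∧ T.leftMaximalB Y ∧ T.rightMaximalB Y} =
      List.reverse '' {X | X ∈ T.SubstrD ∧ T.leftMaximalF X ∧ T.rightMaximalF X} := by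
    ext Y
    simp only [Set.mem_image, Set.mem_setOf_eq]
    constructor
    · intro hY
      exact ⟨Y.reverse, (hiff Y.reverse).mpr (by simpa using hY), by simp⟩
    · rintro ⟨X, hX, rfl⟩
      exact (hiff X).mp hX
  rw [hset, Set.ncard_image_of_injective _ List.reverse_injective]
end

section
/- In the suffix tree of a backward trie, if a node V has a soft W-link for character a, then V has a proper descendant U (U ≠ V) that has a hard W-link for a; moreover the highest such descendant U is unique, and for every node Z on the path from V down to U, the W-link of Z for a points to the same node as the W-link of U, namely the explicit node aU. -/
/-!
The W-link target of a substring `s` is its shortest right-maximal extension. If two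
right-maximal extensions of `s` are not prefixes of one another, they diverge after a common
prefix extending `s`; that prefix has two distinct right extensions, so it is right-maximal
too. Hence the shortest right-maximal extension of `s` is a prefix of every other one. For
`s = a :: V` it has the form `a :: U`, with `U ≠ V` because `a :: V` is not right-maximal, and
it is also the W-link target of every `a :: Z` with `V <+: Z <+: U`.
-/

theorem List.exists_branch_of_not_prefix {α : Type*} {X P Q : List α} (hXP : X <+: P)
    (hXQ : X <+: Q) (hPQ : ¬ P <+: Q) (hQP : ¬ Q <+: P) :
    ∃ Y c d, c ≠ d ∧ X <+: Y ∧ Y ++ [c] <+: P ∧ Y ++ [d] <+: Q := by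
  induction P generalizing X Q with
  | nil => exact absurd Q.nil_prefix hPQ
  | cons p P ih =>
    obtain _ | ⟨q, Q⟩ := Q
    · exact absurd (p :: P).nil_prefix hQP
    by_cases hpq : p = q
    · subst hpq
      simp only [List.cons_prefix_cons, true_and] at hPQ hQP
      obtain _ | ⟨x, X⟩ := X
      · obtain ⟨Y, c, d, hcd, -, hYP, hYQ⟩ := ih P.nil_prefix Q.nil_prefix hPQ hQP
        exact ⟨p :: Y, c, d, hcd, (p :: Y).nil_prefix, by simpa using hYP, by simpa using hYQ⟩
      · simp only [List.cons_prefix_cons] at hXP hXQ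
        obtain ⟨Y, c, d, hcd, hXY, hYP, hYQ⟩ := ih hXP.2 hXQ.2 hPQ hQP
        exact ⟨p :: Y, c, d, hcd, by simpa [hXP.1] using hXY, by simpa using hYP,
          by simpa using hYQ⟩
    · obtain _ | ⟨x, X⟩ := X
      · exact ⟨[], p, q, hpq, List.nil_prefix, by simp, by simp⟩
      · simp only [List.cons_prefix_cons] at hXP hXQ
        exact absurd (hXP.1.symm.trans hXQ.1) hpq

namespace LTree

variable {n : ℕ} {A : Type*} (T : LTree n A)

theorem strUp_tail {v : Fin n} (h : T.strUp v ≠ []) :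
    (T.strUp v).tail = T.strUp (T.parent v) := by
  rw [strUp] at h ⊢
  split_ifs at h ⊢
  · exact absurd rfl h
  · rfl

theorem mem_substrU_of_prefix {s t : List A} (hs : s ∈ T.SubstrU) (h : t <+: s) :
    t ∈ T.SubstrU := by
  obtain ⟨v, m, rfl⟩ := hs
  exact ⟨v, t.length, List.prefix_iff_eq_take.mp (List.prefix_take_iff.mp h).1⟩

theorem mem_substrU_of_cons {b : A} {s : List A} (h : b :: s ∈ T.SubstrU) : s ∈ T.SubstrU := by
  obtain ⟨v, m, hv⟩ := h
  have hne : T.strUp v ≠ [] := by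
    intro h0
    simp [h0] at hv
  refine ⟨T.parent v, m - 1, ?_⟩
  rw [← T.strUp_tail hne, ← List.tail_take_eq_take_tail, ← hv, List.tail_cons]

theorem mem_substrU_of_rightMaximalB {s : List A} (h : T.rightMaximalB s) : s ∈ T.SubstrU := by
  rcases h with ⟨b, -, -, hb, -⟩ | ⟨v, rfl⟩
  · exact T.mem_substrU_of_prefix hb (List.prefix_append s [b])
  · exact ⟨v, _, (List.take_length).symm⟩

theorem rightMaximalB_of_cons {b : A} {s : List A} (h : T.rightMaximalB (b :: s)) :
    T.rightMaximalB s := by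
  rcases h with ⟨c, d, hcd, hc, hd⟩ | ⟨v, hv⟩
  · exact Or.inl ⟨c, d, hcd, T.mem_substrU_of_cons hc, T.mem_substrU_of_cons hd⟩
  · refine Or.inr ⟨T.parent v, ?_⟩
    rw [← T.strUp_tail (hv ▸ List.cons_ne_nil b s), ← hv, List.tail_cons]

theorem exists_rightMaximalB_extension {s : List A} (hs : s ∈ T.SubstrU) :
    ∃ t, T.rightMaximalB t ∧ s <+: t := by
  obtain ⟨v, m, rfl⟩ := hs
  exact ⟨T.strUp v, Or.inr ⟨v, rfl⟩, List.take_prefix m _⟩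

theorem exists_least_rightMaximalB_extension {s : List A} (hs : s ∈ T.SubstrU) :
    ∃ t, T.rightMaximalB t ∧ s <+: t ∧ ∀ t', T.rightMaximalB t' → s <+: t' → t <+: t' := by
  obtain ⟨t, ⟨ht, hst⟩, hmin⟩ := (InvImage.wf List.length wellFounded_lt).has_min
    {t | T.rightMaximalB t ∧ s <+: t} (T.exists_rightMaximalB_extension hs)
  refine ⟨t, ht, hst, fun t' ht' hst' => ?_⟩
  by_contra htt'
  have ht't : ¬ t' <+: t := fun h =>
    htt' (h.eq_of_length (le_antisymm h.length_le (not_lt.mp (hmin t' ⟨ht', hst'⟩))) ▸ h)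
  obtain ⟨y, c, d, hcd, hsy, hyt, hyt'⟩ :=
    List.exists_branch_of_not_prefix hst hst' htt' ht't
  have hy : T.rightMaximalB y := Or.inl ⟨c, d, hcd,
    T.mem_substrU_of_prefix (T.mem_substrU_of_rightMaximalB ht) hyt,
    T.mem_substrU_of_prefix (T.mem_substrU_of_rightMaximalB ht') hyt'⟩
  exact hmin y ⟨hy, hsy⟩ (by simpa using hyt.length_le : y.length < t.length)

end LTree

theorem stmt18_general {n : ℕ} {A : Type*} (T : LTree n A) (a : A) (V : List A)
    (hin : (a :: V) ∈ T.SubstrU) (hsoft : ¬ T.rightMaximalB (a :: V)) :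
    ∃ U : List A, U ∈ T.SubstrU ∧ T.rightMaximalB U ∧ V <+: U ∧ V ≠ U ∧
      T.rightMaximalB (a :: U) ∧
      (∀ U' : List A, U' ∈ T.SubstrU → T.rightMaximalB U' → V <+: U' →
        T.rightMaximalB (a :: U') → U <+: U') ∧
      (∀ Z : List A, Z ∈ T.SubstrU → T.rightMaximalB Z → V <+: Z → Z <+: U →
        (a :: Z) <+: (a :: U) ∧
        ∀ W : List A, W ∈ T.SubstrU → T.rightMaximalB W →
          (a :: Z) <+: W → (a :: U) <+: W) := by
  obtain ⟨_ | ⟨b, U⟩, hU, haVU, hleast⟩ := T.exists_least_rightMaximalB_extension hin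
  · exact absurd haVU (by simp)
  obtain ⟨rfl, hVU⟩ := List.cons_prefix_cons.mp haVU
  refine ⟨U, T.mem_substrU_of_cons (T.mem_substrU_of_rightMaximalB hU),
    T.rightMaximalB_of_cons hU, hVU, fun hVeqU => hsoft (hVeqU ▸ hU), hU, ?_, ?_⟩
  · intro U' _ _ hVU' hU'
    exact (List.cons_prefix_cons.mp (hleast _ hU' (List.cons_prefix_cons.mpr ⟨rfl, hVU'⟩))).2
  · intro Z _ _ hVZ hZU
    refine ⟨List.cons_prefix_cons.mpr ⟨rfl, hZU⟩, fun W _ hW hZW => hleast W hW ?_⟩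
    exact (List.cons_prefix_cons.mpr ⟨rfl, hVZ⟩).trans hZW

/-- if an explicit node `V` of the suffix tree of a backward
trie has a soft W-link for `a` (i.e. `a·V ∈ Substr(T_b)` but `a·V` is not
right-maximal), then `V` has a proper descendant `U` (an explicit node having
`V` as a proper prefix) with a hard W-link for `a`; the highest (shortest)
such descendant `U` is unique — it is a prefix of every such descendant — and
for every explicit node `Z` on the path from `V` down to `U`, the W-link of
`Z` for `a` points to the same node `a·U`, i.e. `a·U` is the shortest
right-maximal extension of `a·Z`. -/
theorem stmt18 {n : ℕ} {A : Type*} (T : LTree n A) (a : A) (V : List A)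
    (hV : V ∈ T.SubstrU) (hrV : T.rightMaximalB V)
    (hin : (a :: V) ∈ T.SubstrU) (hsoft : ¬ T.rightMaximalB (a :: V)) :
    ∃ U : List A, U ∈ T.SubstrU ∧ T.rightMaximalB U ∧ V <+: U ∧ V ≠ U ∧
      T.rightMaximalB (a :: U) ∧
      (∀ U' : List A, U' ∈ T.SubstrU → T.rightMaximalB U' → V <+: U' →
        T.rightMaximalB (a :: U') → U <+: U') ∧
      (∀ Z : List A, Z ∈ T.SubstrU → T.rightMaximalB Z → V <+: Z → Z <+: U →
        (a :: Z) <+: (a :: U) ∧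
        ∀ W : List A, W ∈ T.SubstrU → T.rightMaximalB W →
          (a :: Z) <+: W → (a :: U) <+: W) :=
  stmt18_general T a V hin hsoft
end
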